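/- Let N ≥ 1 and let Z be an N×N complex matrix with Z = Zᵗ and 1 − ZZ* positive definite. Then there exist N×N complex matrices U, V satisfying U*U − V*V = 1 and U*V̄ = V*Ū, such that Z = −(U*)⁻¹V*. Moreover, U and V are unique up to multiplication by a unitary from the right: if (U', V') is another such pair then there is a unitary N×N matrix W with U' = UW and V' = VW. -/

import Mathlib

/-!
Given `U` invertible, `Z = -(U*)⁻¹V*` means `V = -Z*U`, and then `U*U - V*V = U*(1 - ZZ*)U`
while `U*V̄ = V*Ū` follows from `Z = Zᵗ`. So the Bogoliubov pairs for `Z` are exactly the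
`(U, -Z*U)` with `U*(1 - ZZ*)U = 1`. Factoring `1 - ZZ* = S*S` with `S` invertible, this
condition says that `SU` is unitary, so the pairs are `(S⁻¹W, -Z*S⁻¹W)` with `W` unitary.
-/

open Matrix
open scoped ComplexOrder

/-- Entrywise complex conjugate of a matrix. -/
def matConj {m n : Type*} (M : Matrix m n ℂ) : Matrix m n ℂ := M.map (starRingEnd ℂ)

lemma matConj_mul {l m n : Type*} [Fintype m] (A : Matrix l m ℂ) (B : Matrix m n ℂ) :
    matConj (A * B) = matConj A * matConj B :=
  Matrix.map_mul

lemma matConj_neg {m n : Type*} (A : Matrix m n ℂ) : matConj (-A) = -matConj A := by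
  ext i j
  simp [matConj]

lemma matConj_conjTranspose {m n : Type*} (A : Matrix m n ℂ) : matConj Aᴴ = Aᵀ := by
  ext i j
  simp [matConj]

namespace Matrix

lemma mul_mem_unitaryGroup_iff {n α : Type*} [Fintype n] [DecidableEq n] [CommRing α]
    [StarRing α] (S X : Matrix n n α) :
    S * X ∈ unitaryGroup n α ↔ Xᴴ * (Sᴴ * S) * X = 1 := by
  rw [mem_unitaryGroup_iff', star_eq_conjTranspose, conjTranspose_mul]
  simp only [Matrix.mul_assoc]

open scoped MatrixOrder in
lemma PosDef.exists_isUnit_eq_conjTranspose_mul_self {n : Type*} [Fintype n] [DecidableEq n]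
    {A : Matrix n n ℂ} (hA : A.PosDef) : ∃ S : Matrix n n ℂ, IsUnit S ∧ Sᴴ * S = A := by
  obtain ⟨S, hS, rfl⟩ :=
    CStarAlgebra.isStrictlyPositive_iff_eq_star_mul_self.mp hA.isStrictlyPositive
  exact ⟨S, hS, rfl⟩

end Matrix

section Bogoliubov

variable {n : Type*} [Fintype n] {U V Z : Matrix n n ℂ}

lemma isUnit_of_conjTranspose_mul_self_sub_eq_one [DecidableEq n]
    (h : Uᴴ * U - Vᴴ * V = 1) : IsUnit U := by
  have hpos : (Uᴴ * U).PosDef := by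
    rw [sub_eq_iff_eq_add.mp h]
    exact PosDef.one.add_posSemidef (posSemidef_conjTranspose_mul_self V)
  exact isUnit_of_mul_isUnit_right hpos.isUnit

lemma eq_neg_inv_conjTranspose_mul_iff [DecidableEq n] (hU : IsUnit U) :
    Z = -(Uᴴ)⁻¹ * Vᴴ ↔ V = -(Zᴴ * U) := by
  have hdet : IsUnit U.det := (isUnit_iff_isUnit_det U).mp hU
  have hdetH : IsUnit Uᴴ.det := (isUnit_iff_isUnit_det _).mp ((isUnit_conjTranspose U).mpr hU)
  constructor
  · rintro rfl
    simp [conjTranspose_nonsing_inv, Matrix.mul_assoc, nonsing_inv_mul _ hdet]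
  · rintro rfl
    simp [conjTranspose_mul, nonsing_inv_mul_cancel_left _ _ hdetH]

lemma conjTranspose_mul_self_sub_eq [DecidableEq n] (hV : V = -(Zᴴ * U)) :
    Uᴴ * U - Vᴴ * V = Uᴴ * (1 - Z * Zᴴ) * U := by
  subst hV
  simp only [conjTranspose_neg, conjTranspose_mul, conjTranspose_conjTranspose, neg_mul_neg]
  noncomm_ring

lemma conjTranspose_mul_matConj_eq (hZ : Z = Zᵀ) (hV : V = -(Zᴴ * U)) :
    Uᴴ * matConj V = Vᴴ * matConj U := by
  subst hV
  rw [matConj_neg, matConj_mul, matConj_conjTranspose, ← hZ]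
  simp [conjTranspose_mul, Matrix.mul_assoc]

lemma bogoliubov_conditions_iff [DecidableEq n] (hZ : Z = Zᵀ) :
    (Uᴴ * U - Vᴴ * V = 1 ∧ Uᴴ * matConj V = Vᴴ * matConj U ∧ Z = -(Uᴴ)⁻¹ * Vᴴ) ↔
      (Uᴴ * (1 - Z * Zᴴ) * U = 1 ∧ V = -(Zᴴ * U)) := by
  constructor
  · rintro ⟨hnorm, -, hZUV⟩
    have hV := (eq_neg_inv_conjTranspose_mul_iff
      (isUnit_of_conjTranspose_mul_self_sub_eq_one hnorm)).mp hZUV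
    exact ⟨(conjTranspose_mul_self_sub_eq hV).symm.trans hnorm, hV⟩
  · rintro ⟨hnorm, hV⟩
    have hU : IsUnit U := IsUnit.of_mul_eq_one_right _ hnorm
    exact ⟨(conjTranspose_mul_self_sub_eq hV).trans hnorm, conjTranspose_mul_matConj_eq hZ hV,
      (eq_neg_inv_conjTranspose_mul_iff hU).mpr hV⟩

end Bogoliubov

theorem Z_matrix_bogoliubov_existence_uniqueness_general (N : ℕ)
    (Z : Matrix (Fin N) (Fin N) ℂ)
    (hsymm : Z = Zᵀ)
    (hpos : (1 - Z * Zᴴ).PosDef) :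
    ∃ U V : Matrix (Fin N) (Fin N) ℂ,
      (Uᴴ * U - Vᴴ * V = 1 ∧ Uᴴ * matConj V = Vᴴ * matConj U ∧ Z = -(Uᴴ)⁻¹ * Vᴴ) ∧
      (∀ U' V' : Matrix (Fin N) (Fin N) ℂ,
        (U'ᴴ * U' - V'ᴴ * V' = 1 ∧ U'ᴴ * matConj V' = V'ᴴ * matConj U' ∧
          Z = -(U'ᴴ)⁻¹ * V'ᴴ) →
        ∃ W : Matrix (Fin N) (Fin N) ℂ,
          W ∈ Matrix.unitaryGroup (Fin N) ℂ ∧ U' = U * W ∧ V' = V * W) := by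
  simp only [bogoliubov_conditions_iff hsymm]
  obtain ⟨S, hS, hSS⟩ := hpos.exists_isUnit_eq_conjTranspose_mul_self
  have hdet : IsUnit S.det := (isUnit_iff_isUnit_det S).mp hS
  refine ⟨S⁻¹, _, ⟨?_, rfl⟩, ?_⟩
  · rw [← hSS, ← mul_mem_unitaryGroup_iff, mul_nonsing_inv _ hdet]
    exact one_mem _
  rintro U' _ ⟨hU', rfl⟩
  refine ⟨S * U', (mul_mem_unitaryGroup_iff S U').mpr (hSS ▸ hU'), ?_, ?_⟩
  · rw [nonsing_inv_mul_cancel_left _ _ hdet]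
  · rw [neg_mul, Matrix.mul_assoc, nonsing_inv_mul_cancel_left _ _ hdet]

/-- Every symmetric `Z` with `1 − ZZ*` positive definite arises as
`Z = −(U*)⁻¹V*` for a Bogoliubov pair `(U, V)`, unique up to a unitary on the right. -/
theorem Z_matrix_bogoliubov_existence_uniqueness (N : ℕ) (hN : 1 ≤ N)
    (Z : Matrix (Fin N) (Fin N) ℂ)
    (hsymm : Z = Zᵀ)
    (hpos : (1 - Z * Zᴴ).PosDef) :
    ∃ U V : Matrix (Fin N) (Fin N) ℂ,
      (Uᴴ * U - Vᴴ * V = 1 ∧ Uᴴ * matConj V = Vᴴ * matConj U ∧ Z = -(Uᴴ)⁻¹ * Vᴴ) ∧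
      (∀ U' V' : Matrix (Fin N) (Fin N) ℂ,
        (U'ᴴ * U' - V'ᴴ * V' = 1 ∧ U'ᴴ * matConj V' = V'ᴴ * matConj U' ∧
          Z = -(U'ᴴ)⁻¹ * V'ᴴ) →
        ∃ W : Matrix (Fin N) (Fin N) ℂ,
          W ∈ Matrix.unitaryGroup (Fin N) ℂ ∧ U' = U * W ∧ V' = V * W) :=
  Z_matrix_bogoliubov_existence_uniqueness_general N Z hsymm hpos
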